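/- (Carlitz) For all n ≥ 1, (x^n - y^n)/(x - y) = ∑_{k=0}^{⌊(n-1)/2⌋} q^{k(k+1)/2} · qbinom(n-k-1, k) · (-xy)^k · r_{n-1-2k}(x,y), where r_m(x,y) = ∑_{j=0}^{m} qbinom(m,j) x^j y^{m-j} is the Rogers-Szegő polynomial. -/

import Mathlib

/-! Writing `n = m + 1`, both sides satisfy `f (m + 2) = (x + y) f (m + 1) - x y f m` and agree
at `m = 0, 1`. For the geometric sum this is immediate. For the Carlitz sum, q-Pascal, the
Rogers–Szegő recurrence `r_{m+2} = (x + y) r_{m+1} - (1 - q^(m+1)) x y r_m` and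
`(1 - q^(n+1-k)) [n+1, k] = (1 - q^(n+1)) [n, k]` show that the `k`-th terms `T_m(k)` satisfy the
same recurrence up to a defect `x y (q^(m+1-k) T_m(k) - q^(m+2-k) T_m(k-1))`, which telescopes
away in the sum. -/

open Finset

noncomputable section

abbrev K : Type := RatFunc ℚ

def q : K := RatFunc.X

def qint (a : K) (m : ℕ) : K := ∑ i ∈ range m, a ^ i

def qfact (a : K) (m : ℕ) : K := ∏ i ∈ range m, qint a (i + 1)

def qbinom (a : K) (n k : ℕ) : K :=
  if k ≤ n then qfact a n / (qfact a k * qfact a (n - k)) else 0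

/-- q-Fibonacci polynomials F_n(x,s,q) with base `a`. -/
def qF (a x s : K) : ℕ → K
  | 0 => 0
  | n + 1 => ∑ k ∈ range (n / 2 + 1),
      a ^ (k * (k + 1) / 2) * qbinom a (n - k) k * s ^ k * x ^ (n - 2 * k)

/-- q-Lucas polynomials L_n(x,s,q) with base `a` (L_0 = 2). -/
def qL (a x s : K) (n : ℕ) : K :=
  if n = 0 then 2 else
  ∑ k ∈ range (n / 2 + 1),
    a ^ (k * (k - 1) / 2) * (qint a n / qint a (n - k)) * qbinom a (n - k) k
      * s ^ k * x ^ (n - 2 * k)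

/-- Starred variant: L*_0 = 1, L*_n = L_n for n > 0. -/
def qLs (a x s : K) (n : ℕ) : K := if n = 0 then 1 else qL a x s n

/-- Rogers-Szegő polynomial. -/
def rs (a x y : K) (m : ℕ) : K := ∑ j ∈ range (m + 1), qbinom a m j * x ^ j * y ^ (m - j)

/-- q-Pochhammer (q;q)_m. -/
def qpoch (a : K) (m : ℕ) : K := ∏ j ∈ range m, (1 - a ^ (j + 1))

theorem pow_triangle_succ {M : Type*} [Monoid M] (a : M) (k : ℕ) :
    a ^ ((k + 1) * (k + 1 + 1) / 2) = a ^ (k * (k + 1) / 2) * a ^ (k + 1) := by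
  rw [← pow_add, show (k + 1) * (k + 1 + 1) = k * (k + 1) + 2 * (k + 1) by ring,
    Nat.add_mul_div_left _ _ two_pos]

theorem geom_sum₂_add_two {R : Type*} [CommRing R] (x y : R) (m : ℕ) :
    ∑ i ∈ range (m + 3), x ^ i * y ^ (m + 2 - i)
      = (x + y) * ∑ i ∈ range (m + 2), x ^ i * y ^ (m + 1 - i)
        - x * y * ∑ i ∈ range (m + 1), x ^ i * y ^ (m - i) := by
  have h₂ := geom_sum₂_succ_eq x y (n := m + 2)
  have h₁ := geom_sum₂_succ_eq x y (n := m + 1)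
  rw [show m + 2 - 1 = m + 1 by omega] at h₂
  rw [Nat.add_sub_cancel] at h₁
  linear_combination h₂ - x * h₁

section

variable {a : K}

lemma qfact_zero : qfact a 0 = 1 := prod_range_zero _

lemma qfact_succ (m : ℕ) : qfact a (m + 1) = qfact a m * qint a (m + 1) :=
  prod_range_succ _ _

lemma one_sub_mul_qint (m : ℕ) : (1 - a) * qint a m = 1 - a ^ m :=
  mul_neg_geom_sum a m

lemma qint_add (m n : ℕ) : qint a (m + n) = qint a m + a ^ m * qint a n := by
  simp only [qint, sum_range_add, mul_sum, pow_add]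

lemma qint_succ_ne_zero (ha : ∀ m, qfact a m ≠ 0) (m : ℕ) : qint a (m + 1) ≠ 0 :=
  right_ne_zero_of_mul (qfact_succ m ▸ ha (m + 1))

lemma qbinom_of_lt {n k : ℕ} (h : n < k) : qbinom a n k = 0 := by
  simp [qbinom, Nat.not_le.mpr h]

lemma qbinom_of_le {n k : ℕ} (h : k ≤ n) :
    qbinom a n k = qfact a n / (qfact a k * qfact a (n - k)) := if_pos h

lemma qbinom_zero_right (ha : ∀ m, qfact a m ≠ 0) (n : ℕ) : qbinom a n 0 = 1 := by
  rw [qbinom_of_le n.zero_le, qfact_zero, one_mul, Nat.sub_zero, div_self (ha n)]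

lemma qbinom_self (ha : ∀ m, qfact a m ≠ 0) (n : ℕ) : qbinom a n n = 1 := by
  rw [qbinom_of_le le_rfl, Nat.sub_self, qfact_zero, mul_one, div_self (ha n)]

lemma qint_mul_qbinom_succ_succ (ha : ∀ m, qfact a m ≠ 0) (n k : ℕ) :
    qint a (k + 1) * qbinom a (n + 1) (k + 1) = qint a (n + 1) * qbinom a n k := by
  rcases lt_or_ge n k with h | h
  · rw [qbinom_of_lt h, qbinom_of_lt (by omega), mul_zero, mul_zero]
  rw [qbinom_of_le h, qbinom_of_le (by omega), Nat.add_sub_add_right, qfact_succ, qfact_succ]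
  have := qint_succ_ne_zero ha k
  field_simp [ha k, ha (n - k)]

lemma qint_mul_qbinom_succ (ha : ∀ m, qfact a m ≠ 0) (n k : ℕ) :
    qint a (k + 1) * qbinom a n (k + 1) = qint a (n - k) * qbinom a n k := by
  rcases le_or_gt n k with h | h
  · rw [qbinom_of_lt (by omega), Nat.sub_eq_zero_of_le h]
    simp [qint]
  obtain ⟨d, rfl⟩ : ∃ d, n = k + 1 + d := ⟨n - (k + 1), by omega⟩
  rw [qbinom_of_le (by omega), qbinom_of_le (by omega), show k + 1 + d - k = d + 1 by omega,
    Nat.add_sub_cancel_left, qfact_succ d, qfact_succ k]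
  have := qint_succ_ne_zero ha k
  have := qint_succ_ne_zero ha d
  field_simp [ha k, ha d]

theorem qbinom_succ_succ (ha : ∀ m, qfact a m ≠ 0) (n k : ℕ) :
    qbinom a (n + 1) (k + 1) = qbinom a n (k + 1) + a ^ (n - k) * qbinom a n k := by
  rcases lt_or_ge n k with h | h
  · simp [qbinom_of_lt h, qbinom_of_lt (show n < k + 1 by omega),
      qbinom_of_lt (show n + 1 < k + 1 by omega)]
  apply mul_left_cancel₀ (qint_succ_ne_zero ha k)
  rw [qint_mul_qbinom_succ_succ ha, mul_add, qint_mul_qbinom_succ ha,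
    show n + 1 = n - k + (k + 1) by omega, qint_add]
  ring

lemma qint_sub_mul_qbinom_succ (ha : ∀ m, qfact a m ≠ 0) (n k : ℕ) :
    qint a (n + 1 - k) * qbinom a (n + 1) k = qint a (n + 1) * qbinom a n k := by
  cases k with
  | zero => rw [qbinom_zero_right ha, qbinom_zero_right ha, Nat.sub_zero]
  | succ k => rw [← qint_mul_qbinom_succ ha, qint_mul_qbinom_succ_succ ha]

theorem one_sub_pow_mul_qbinom_succ (ha : ∀ m, qfact a m ≠ 0) (n k : ℕ) :
    (1 - a ^ (n + 1 - k)) * qbinom a (n + 1) k = (1 - a ^ (n + 1)) * qbinom a n k := by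
  rw [← one_sub_mul_qint, ← one_sub_mul_qint, mul_assoc, mul_assoc, qint_sub_mul_qbinom_succ ha]

lemma qbinom_add_two_succ (ha : ∀ m, qfact a m ≠ 0) (m j : ℕ) :
    qbinom a (m + 2) (j + 1)
      = qbinom a (m + 1) (j + 1) + qbinom a (m + 1) j - (1 - a ^ (m + 1)) * qbinom a m j := by
  linear_combination qbinom_succ_succ ha (m + 1) j - one_sub_pow_mul_qbinom_succ ha m j

lemma rs_zero (ha : ∀ m, qfact a m ≠ 0) (x y : K) : rs a x y 0 = 1 := by
  simp [rs, qbinom_zero_right ha]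

lemma rs_one (ha : ∀ m, qfact a m ≠ 0) (x y : K) : rs a x y 1 = x + y := by
  simp [rs, sum_range_succ, qbinom_zero_right ha, qbinom_self ha, add_comm]

lemma rs_eq_sum_range (x y : K) {m N : ℕ} (h : m < N) :
    rs a x y m = ∑ j ∈ range N, qbinom a m j * x ^ j * y ^ (m - j) := by
  refine sum_subset (range_subset_range.mpr h) fun j _ hj => ?_
  rw [qbinom_of_lt (by simpa using hj), zero_mul, zero_mul]

lemma y_mul_rs (x y : K) (m : ℕ) :
    y * rs a x y m = ∑ j ∈ range (m + 2), qbinom a m j * x ^ j * y ^ (m + 1 - j) := by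
  rw [rs_eq_sum_range x y (by omega : m < m + 2), mul_sum]
  refine sum_congr rfl fun j _ => ?_
  rcases le_or_gt j m with h | h
  · rw [Nat.sub_add_comm h, pow_succ]
    ring
  · simp [qbinom_of_lt h]

theorem rs_add_two (ha : ∀ m, qfact a m ≠ 0) (x y : K) (m : ℕ) :
    rs a x y (m + 2)
      = (x + y) * rs a x y (m + 1) - (1 - a ^ (m + 1)) * (x * y) * rs a x y m := by
  have hrs : rs a x y (m + 2)
      = ∑ j ∈ range (m + 2), qbinom a (m + 2) (j + 1) * x ^ (j + 1) * y ^ (m + 1 - j)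
        + y ^ (m + 2) := by
    simp [rs, sum_range_succ' _ (m + 2), qbinom_zero_right ha]
  have hy : y * rs a x y (m + 1)
      = ∑ j ∈ range (m + 2), qbinom a (m + 1) (j + 1) * x ^ (j + 1) * y ^ (m + 1 - j)
        + y ^ (m + 2) := by
    simp [y_mul_rs, sum_range_succ' _ (m + 2), qbinom_zero_right ha]
  have hx : x * rs a x y (m + 1)
      = ∑ j ∈ range (m + 2), qbinom a (m + 1) j * x ^ (j + 1) * y ^ (m + 1 - j) := by
    rw [rs, mul_sum]
    exact sum_congr rfl fun j _ => by ring
  have hxy : x * y * rs a x y m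
      = ∑ j ∈ range (m + 2), qbinom a m j * x ^ (j + 1) * y ^ (m + 1 - j) := by
    rw [mul_assoc, y_mul_rs, mul_sum]
    exact sum_congr rfl fun j _ => by ring
  have hcoeff : ∑ j ∈ range (m + 2), qbinom a (m + 2) (j + 1) * x ^ (j + 1) * y ^ (m + 1 - j)
      = ∑ j ∈ range (m + 2), qbinom a (m + 1) (j + 1) * x ^ (j + 1) * y ^ (m + 1 - j)
        + ∑ j ∈ range (m + 2), qbinom a (m + 1) j * x ^ (j + 1) * y ^ (m + 1 - j)
        - (1 - a ^ (m + 1))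
          * ∑ j ∈ range (m + 2), qbinom a m j * x ^ (j + 1) * y ^ (m + 1 - j) := by
    rw [mul_sum, ← sum_add_distrib, ← sum_sub_distrib]
    exact sum_congr rfl fun j _ => by rw [qbinom_add_two_succ ha]; ring
  linear_combination hrs + hcoeff - hy - hx + (1 - a ^ (m + 1)) * hxy

def carlitzTerm (a x y : K) (m k : ℕ) : K :=
  a ^ (k * (k + 1) / 2) * qbinom a (m - k) k * (-(x * y)) ^ k * rs a x y (m - 2 * k)

def carlitzSum (a x y : K) (m : ℕ) : K := ∑ k ∈ range (m / 2 + 1), carlitzTerm a x y m k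

lemma carlitzTerm_eq_zero (x y : K) {m k : ℕ} (h : m < 2 * k) : carlitzTerm a x y m k = 0 := by
  rw [carlitzTerm, qbinom_of_lt (by omega), mul_zero, zero_mul, zero_mul]

lemma carlitzTerm_of_eq_two_mul_add (x y : K) {m k j : ℕ} (h : m = 2 * k + j) :
    carlitzTerm a x y m k
      = a ^ (k * (k + 1) / 2) * qbinom a (k + j) k * (-(x * y)) ^ k * rs a x y j := by
  rw [carlitzTerm, show m - k = k + j by omega, show m - 2 * k = j by omega]

lemma carlitzSum_eq_sum_range (x y : K) {m N : ℕ} (h : m / 2 < N) :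
    carlitzSum a x y m = ∑ k ∈ range N, carlitzTerm a x y m k :=
  sum_subset (range_subset_range.mpr h) fun k _ hk =>
    carlitzTerm_eq_zero x y (by simp at hk; omega)

lemma carlitzTerm_add_two_zero (ha : ∀ m, qfact a m ≠ 0) (x y : K) (m : ℕ) :
    carlitzTerm a x y (m + 2) 0 = (x + y) * carlitzTerm a x y (m + 1) 0
      - (1 - a ^ (m + 1)) * (x * y) * carlitzTerm a x y m 0 := by
  simp [carlitzTerm, qbinom_zero_right ha, rs_add_two ha]

lemma carlitzTerm_two_mul_add_add_two_succ (ha : ∀ m, qfact a m ≠ 0) (x y : K) (k j : ℕ) :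
    carlitzTerm a x y (2 * k + j + 2) (k + 1)
      = (x + y) * carlitzTerm a x y (2 * k + j + 1) (k + 1)
        - (1 - a ^ (k + j)) * (x * y) * carlitzTerm a x y (2 * k + j) (k + 1)
        - a ^ (k + j + 1) * (x * y) * carlitzTerm a x y (2 * k + j) k := by
  have hg := pow_triangle_succ a k
  rcases j with _ | _ | j
  · rw [carlitzTerm_of_eq_two_mul_add x y (show 2 * k + 0 + 2 = 2 * (k + 1) + 0 by ring),
      carlitzTerm_eq_zero x y (show 2 * k + 0 + 1 < 2 * (k + 1) by omega),
      carlitzTerm_eq_zero x y (show 2 * k + 0 < 2 * (k + 1) by omega),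
      carlitzTerm_of_eq_two_mul_add x y (show 2 * k + 0 = 2 * k + 0 by ring), hg]
    simp only [qbinom_self ha, add_zero]
    ring
  · rw [carlitzTerm_of_eq_two_mul_add x y (show 2 * k + (0 + 1) + 2 = 2 * (k + 1) + 1 by ring),
      carlitzTerm_of_eq_two_mul_add x y (show 2 * k + (0 + 1) + 1 = 2 * (k + 1) + 0 by ring),
      carlitzTerm_eq_zero x y (show 2 * k + (0 + 1) < 2 * (k + 1) by omega),
      carlitzTerm_of_eq_two_mul_add x y (show 2 * k + (0 + 1) = 2 * k + 1 by ring), hg,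
      qbinom_succ_succ ha (k + 1) k, rs_one ha, rs_zero ha]
    simp only [qbinom_self ha, add_zero, Nat.add_sub_cancel_left]
    ring
  · rw [carlitzTerm_of_eq_two_mul_add x y (show 2 * k + (j + 2) + 2 = 2 * (k + 1) + (j + 2) by ring),
      carlitzTerm_of_eq_two_mul_add x y (show 2 * k + (j + 2) + 1 = 2 * (k + 1) + (j + 1) by ring),
      carlitzTerm_of_eq_two_mul_add x y (show 2 * k + (j + 2) = 2 * (k + 1) + j by ring),
      carlitzTerm_of_eq_two_mul_add x y (show 2 * k + (j + 2) = 2 * k + (j + 2) by ring), hg,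
      show k + 1 + (j + 2) = k + j + 2 + 1 by ring, qbinom_succ_succ ha (k + j + 2) k,
      show k + j + 2 - k = j + 2 by omega, show k + 1 + (j + 1) = k + j + 2 by ring,
      show k + 1 + j = k + j + 1 by ring, show k + (j + 2) = k + j + 2 by ring,
      show k + j + 2 + 1 = (k + 1) + (j + 2) by ring, pow_add, rs_add_two ha]
    have hC := one_sub_pow_mul_qbinom_succ ha (k + j + 1) (k + 1)
    rw [show k + j + 1 + 1 - (k + 1) = j + 1 by omega] at hC
    linear_combination (-(a ^ (k * (k + 1) / 2) * a ^ (k + 1) * (-(x * y)) ^ (k + 1) * (x * y)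
      * rs a x y j)) * hC

lemma carlitzTerm_add_two_succ (ha : ∀ m, qfact a m ≠ 0) (x y : K) (m k : ℕ) :
    carlitzTerm a x y (m + 2) (k + 1)
      = (x + y) * carlitzTerm a x y (m + 1) (k + 1)
        - (1 - a ^ (m - k)) * (x * y) * carlitzTerm a x y m (k + 1)
        - a ^ (m + 1 - k) * (x * y) * carlitzTerm a x y m k := by
  rcases lt_or_ge m (2 * k) with h | h
  · simp [carlitzTerm_eq_zero x y h, carlitzTerm_eq_zero x y (show m + 2 < 2 * (k + 1) by omega),
      carlitzTerm_eq_zero x y (show m + 1 < 2 * (k + 1) by omega),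
      carlitzTerm_eq_zero x y (show m < 2 * (k + 1) by omega)]
  obtain ⟨j, rfl⟩ := Nat.exists_eq_add_of_le h
  rw [show 2 * k + j - k = k + j by omega, show 2 * k + j + 1 - k = k + j + 1 by omega]
  exact carlitzTerm_two_mul_add_add_two_succ ha x y k j

theorem carlitzSum_add_two (ha : ∀ m, qfact a m ≠ 0) (x y : K) (m : ℕ) :
    carlitzSum a x y (m + 2)
      = (x + y) * carlitzSum a x y (m + 1) - x * y * carlitzSum a x y m := by
  have htel := sum_range_sub (fun k => a ^ (m + 1 - k) * carlitzTerm a x y m k) (m + 1)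
  simp only [Nat.sub_self, pow_zero, one_mul, Nat.sub_zero, Nat.add_sub_add_right,
    carlitzTerm_eq_zero x y (show m < 2 * (m + 1) by omega)] at htel
  have hsplit : ∑ k ∈ range (m + 1), ((x + y) * carlitzTerm a x y (m + 1) (k + 1)
        - (1 - a ^ (m - k)) * (x * y) * carlitzTerm a x y m (k + 1)
        - a ^ (m + 1 - k) * (x * y) * carlitzTerm a x y m k)
      = (x + y) * ∑ k ∈ range (m + 1), carlitzTerm a x y (m + 1) (k + 1)
        - x * y * ∑ k ∈ range (m + 1), carlitzTerm a x y m (k + 1)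
        + x * y * ∑ k ∈ range (m + 1), (a ^ (m - k) * carlitzTerm a x y m (k + 1)
          - a ^ (m + 1 - k) * carlitzTerm a x y m k) := by
    rw [mul_sum, mul_sum, mul_sum, ← sum_sub_distrib, ← sum_add_distrib]
    exact sum_congr rfl fun k _ => by ring
  rw [carlitzSum_eq_sum_range x y (N := m + 2) (by omega),
    carlitzSum_eq_sum_range x y (N := m + 2) (by omega),
    carlitzSum_eq_sum_range x y (N := m + 2) (by omega),
    sum_range_succ', sum_range_succ' (carlitzTerm a x y (m + 1)),
    sum_range_succ' (carlitzTerm a x y m),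
    sum_congr rfl fun k _ => carlitzTerm_add_two_succ ha x y m k, carlitzTerm_add_two_zero ha,
    hsplit, htel]
  ring

theorem geom_sum₂_eq_carlitzSum (ha : ∀ m, qfact a m ≠ 0) (x y : K) (m : ℕ) :
    ∑ i ∈ range (m + 1), x ^ i * y ^ (m - i) = carlitzSum a x y m := by
  induction m using Nat.twoStepInduction with
  | zero => simp [carlitzSum, carlitzTerm, qbinom_zero_right ha, rs_zero ha]
  | one => simp [carlitzSum, carlitzTerm, sum_range_succ, qbinom_zero_right ha, rs_one ha, add_comm]
  | more m ih₀ ih₁ => rw [geom_sum₂_add_two, carlitzSum_add_two ha, ih₀, ih₁]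

end

lemma qfact_q_ne_zero (m : ℕ) : qfact q m ≠ 0 := by
  refine prod_ne_zero_iff.mpr fun i _ => ?_
  have : qint q (i + 1) = algebraMap (Polynomial ℚ) K (∑ j ∈ range (i + 1), Polynomial.X ^ j) := by
    simp [qint, q, RatFunc.algebraMap_X]
  rw [this]
  refine RatFunc.algebraMap_ne_zero fun h => ?_
  exact Nat.cast_add_one_ne_zero (R := ℚ) i (by simpa using congrArg (Polynomial.eval 1) h)

theorem stmt10 (x y : K) (n : ℕ) (hn : 1 ≤ n) :
    ∑ i ∈ range n, x ^ i * y ^ (n - 1 - i)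
      = ∑ k ∈ range ((n - 1) / 2 + 1), q ^ (k * (k + 1) / 2) * qbinom q (n - k - 1) k
          * (-(x * y)) ^ k * rs q x y (n - 1 - 2 * k) := by
  obtain ⟨m, rfl⟩ : ∃ m, n = m + 1 := ⟨n - 1, by omega⟩
  simpa only [carlitzSum, carlitzTerm, Nat.add_sub_cancel, Nat.sub_right_comm _ _ 1]
    using geom_sum₂_eq_carlitzSum qfact_q_ne_zero x y m
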